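/- Let $A$ be a commutative Noetherian ring, $I \subseteq A$ an ideal, $y$ an element and $d \geq 1$ such that $y^d$ is a non-zerodivisor appropriately, and suppose $P = (I, x-y) : f$ for some $f$, with $J = y^d J'$. Then $P = (y^d I, x - y) : y^d f$; consequently if $\mathfrak{p} \in \operatorname{Ass}(I)$ with $P = \mathfrak{p} + (x-y)$ and $J \subseteq (y)$, then $P \in \operatorname{Ass}(y^d I, x-y)$. -/

import Mathlib

open MvPolynomial

/-- An ideal of a polynomial ring is homogeneous if it contains all homogeneous
components of each of its elements. -/
def IsHomogIdeal {k : Type*} [Field k] {σ : Type*} (I : Ideal (MvPolynomial σ k)) : Prop :=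
  ∀ p ∈ I, ∀ i : ℕ, MvPolynomial.homogeneousComponent i p ∈ I

/-- The depth of a module `M` with respect to an ideal `𝔪`: the supremum of the lengths of
`M`-regular sequences consisting of elements of `𝔪`. -/
noncomputable def idealDepth {R : Type*} [CommRing R] (𝔪 : Ideal R)
    (M : Type*) [AddCommGroup M] [Module R M] : ℕ :=
  sSup {n : ℕ | ∃ rs : List R, rs.length = n ∧ (∀ r ∈ rs, r ∈ 𝔪) ∧
    RingTheory.Sequence.IsRegular M rs}

/-- The depth of `S/Q` for an ideal `Q` of a polynomial ring `S`, with respect to the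
maximal homogeneous ideal of `S`. -/
noncomputable def polyDepth {k : Type*} [Field k] {σ : Type*}
    (Q : Ideal (MvPolynomial σ k)) : ℕ :=
  idealDepth (Ideal.span (Set.range (MvPolynomial.X : σ → MvPolynomial σ k)))
    (MvPolynomial σ k ⧸ Q)

/-- Extension of an ideal of `k[x_1,...,x_r]` to `k[x_1,...,x_r,y_1,...,y_s]`. -/
noncomputable def extA {k : Type*} [Field k] {r s : ℕ}
    (I : Ideal (MvPolynomial (Fin r) k)) : Ideal (MvPolynomial (Fin r ⊕ Fin s) k) :=
  I.map (rename (Sum.inl (β := Fin s)) : MvPolynomial (Fin r) k →ₐ[k] MvPolynomial (Fin r ⊕ Fin s) k)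

/-- Extension of an ideal of `k[y_1,...,y_s]` to `k[x_1,...,x_r,y_1,...,y_s]`. -/
noncomputable def extB {k : Type*} [Field k] {r s : ℕ}
    (J : Ideal (MvPolynomial (Fin s) k)) : Ideal (MvPolynomial (Fin r ⊕ Fin s) k) :=
  J.map (rename (Sum.inr (α := Fin r)) : MvPolynomial (Fin s) k →ₐ[k] MvPolynomial (Fin r ⊕ Fin s) k)

/-!
The substitution `y ↦ x` fixes every variable of `A` and kills `x - y`, while each polynomial is
congruent to its image modulo `x - y`. Hence `(x - y)` is its kernel, so a prime, and
`𝔭R + (x - y)` is the preimage of the prime `𝔭R`. As `x - y ∤ y^d`, the power `y^d` is a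
non-zerodivisor modulo `(x - y)`, which is exactly what lets `y^d` cancel from the colon
`(y^d I + (x - y)) : y^d f`. A prime ideal of the form `L : m` is associated to `R ⧸ L`.
-/

namespace Ideal

variable {R : Type*} [CommRing R]

theorem colon_span_mul_sup_eq {K Q : Ideal R} {t : R} (hQ : ∀ h, t * h ∈ Q → h ∈ Q)
    (f : R) :
    (span {t} * K ⊔ Q).colon (span {t * f}) = (K ⊔ Q).colon (span {f}) := by
  ext g
  simp only [mem_colon_span_singleton]
  constructor
  · intro hg
    obtain ⟨u, hu, q, hq, huq⟩ := Submodule.mem_sup.mp hg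
    obtain ⟨a, ha, rfl⟩ := mem_span_singleton_mul.mp hu
    have hq' : t * (g * f - a) ∈ Q := by
      convert hq using 1
      linear_combination (-1 : R) * huq
    simpa using add_mem (mem_sup_left ha) (mem_sup_right (hQ _ hq') : g * f - a ∈ K ⊔ Q)
  · intro hg
    have : g * (t * f) ∈ span {t} * (K ⊔ Q) := by
      rw [mul_left_comm]; exact mul_mem_mul (mem_span_singleton_self t) hg
    rw [mul_sup] at this
    exact (sup_le_sup_left mul_le_right _ : span {t} * K ⊔ span {t} * Q ≤ _) this

theorem isAssociatedPrime_quotient_of_eq_colon {J P : Ideal R} [hP : P.IsPrime] {m : R}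
    (h : P = J.colon (span {m})) : IsAssociatedPrime P (R ⧸ J) := by
  refine ⟨hP, Quotient.mk J m, ?_⟩
  suffices (⊥ : Submodule R (R ⧸ J)).colon {Quotient.mk J m} = P by rw [this, hP.radical]
  ext g
  rw [Submodule.mem_colon_singleton, Submodule.mem_bot, h, mem_colon_span_singleton,
    Algebra.smul_def, Quotient.algebraMap_eq, ← map_mul, Quotient.eq_zero_iff_mem]

end Ideal

namespace MvPolynomial

variable {R : Type*} [CommRing R] {σ τ : Type*}

theorem isPrime_map_C (𝔭 : Ideal R) [𝔭.IsPrime] :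
    (𝔭.map (C : R →+* MvPolynomial σ R)).IsPrime := by
  rw [← Ideal.mk_ker (I := 𝔭), ← ker_map]
  exact RingHom.ker_isPrime _

theorem isPrime_map_rename_inl (𝔭 : Ideal (MvPolynomial σ R)) [𝔭.IsPrime] :
    (𝔭.map (rename Sum.inl :
      MvPolynomial σ R →ₐ[R] MvPolynomial (σ ⊕ τ) R)).IsPrime := by
  let E := ((renameEquiv R (Equiv.sumComm σ τ)).trans (sumAlgEquiv R τ σ)).toRingEquiv
  have hE : (E : MvPolynomial (σ ⊕ τ) R →+* MvPolynomial τ (MvPolynomial σ R)).comp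
      (rename Sum.inl).toRingHom = C := by
    apply ringHom_ext <;> intro a <;> simp [E]
  have : 𝔭.map (rename Sum.inl : MvPolynomial σ R →ₐ[R] MvPolynomial (σ ⊕ τ) R)
      = (𝔭.map (C : MvPolynomial σ R →+* MvPolynomial τ (MvPolynomial σ R))).map
        (E.symm : MvPolynomial τ (MvPolynomial σ R) →+* MvPolynomial (σ ⊕ τ) R) := by
    rw [← hE, ← Ideal.map_map, Ideal.map_of_equiv]
    rfl
  rw [this]
  have := isPrime_map_C (σ := τ) 𝔭
  exact Ideal.map_isPrime_of_equiv _

theorem X_sub_X_not_dvd_X_pow [Nontrivial R] (a b : σ) (d : ℕ) :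
    ¬ (X a - X b : MvPolynomial σ R) ∣ X b ^ d := fun h => by
  simpa using (map_dvd (eval fun _ => (1 : R)) h)

variable [DecidableEq σ]

theorem sub_rename_update_mem_span_X_sub_X (a b : σ) (p : MvPolynomial σ R) :
    p - rename (Function.update id b a) p ∈ Ideal.span {X a - X b} := by
  have h : (Ideal.Quotient.mk (Ideal.span {(X a - X b : MvPolynomial σ R)})).comp
      (rename (Function.update id b a)).toRingHom = Ideal.Quotient.mk _ := by
    refine ringHom_ext (fun _ => ?_) fun v => ?_
    · simp
    obtain rfl | hv := eq_or_ne v b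
    · simp only [RingHom.comp_apply, AlgHom.toRingHom_eq_coe, RingHom.coe_coe, rename_X,
        Function.update_self]
      exact Ideal.Quotient.eq.mpr (Ideal.subset_span rfl)
    · simp [hv]
  exact Ideal.Quotient.eq.mp (RingHom.congr_fun h p).symm

theorem sup_span_X_sub_X_eq_comap_rename {J : Ideal (MvPolynomial σ R)} (a b : σ)
    (hJ : J.map (rename (Function.update id b a)) ≤ J) :
    J ⊔ Ideal.span {X a - X b} = J.comap (rename (Function.update id b a)) := by
  apply le_antisymm
  · refine sup_le (Ideal.map_le_iff_le_comap.mp hJ) ?_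
    rw [Ideal.span_le, Set.singleton_subset_iff]
    simp [Function.update_apply]
  · intro p hp
    have : p - rename (Function.update id b a) p ∈ J ⊔ Ideal.span {X a - X b} :=
      Ideal.mem_sup_right (sub_rename_update_mem_span_X_sub_X a b p)
    simpa only [add_sub_cancel] using add_mem (Ideal.mem_sup_left (Ideal.mem_comap.mp hp)) this

theorem isPrime_span_X_sub_X [IsDomain R] (a b : σ) :
    (Ideal.span {X a - X b} : Ideal (MvPolynomial σ R)).IsPrime := by
  rw [← bot_sup_eq (Ideal.span _), sup_span_X_sub_X_eq_comap_rename a b (by simp)]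
  exact Ideal.comap_isPrime _ _

end MvPolynomial

theorem isPrime_extA_sup_span_X_sub_X {k : Type*} [Field k] {r s : ℕ}
    (𝔭 : Ideal (MvPolynomial (Fin r) k)) [𝔭.IsPrime] (i : Fin r) (j : Fin s) :
    (extA (s := s) 𝔭 ⊔ Ideal.span {X (Sum.inl i) - X (Sum.inr j)}).IsPrime := by
  have hinl : Function.update id (Sum.inr j) (Sum.inl i) ∘ Sum.inl =
      (Sum.inl : Fin r → Fin r ⊕ Fin s) :=
    funext fun a => Function.update_of_ne Sum.inl_ne_inr _ _
  have hfix : (extA (s := s) 𝔭).map (rename (Function.update id (Sum.inr j) (Sum.inl i)))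
      ≤ extA 𝔭 := by
    refine Ideal.map_le_of_le_comap (Ideal.map_le_of_le_comap fun p hp => ?_)
    rw [Ideal.mem_comap, Ideal.mem_comap, rename_rename, hinl]
    exact Ideal.mem_map_of_mem _ hp
  rw [sup_span_X_sub_X_eq_comap_rename _ _ hfix]
  have : (extA (s := s) 𝔭).IsPrime := isPrime_map_rename_inl 𝔭
  exact Ideal.comap_isPrime _ _

theorem stmt16_general {k : Type*} [Field k] {r s : ℕ}
    (I : Ideal (MvPolynomial (Fin r) k))
    (i : Fin r) (j : Fin s) (d : ℕ)
    (𝔭 : Ideal (MvPolynomial (Fin r) k))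
    (h𝔭 : 𝔭 ∈ associatedPrimes (MvPolynomial (Fin r) k) (MvPolynomial (Fin r) k ⧸ I))
    (P : Ideal (MvPolynomial (Fin r ⊕ Fin s) k))
    (f : MvPolynomial (Fin r ⊕ Fin s) k)
    (hP : P = extA (s := s) 𝔭 ⊔ Ideal.span {X (Sum.inl i) - X (Sum.inr j)})
    (hPf : P = (extA (s := s) I ⊔
        Ideal.span {X (Sum.inl i) - X (Sum.inr j)}).colon (Ideal.span {f})) :
    P = (Ideal.span {(X (Sum.inr j) : MvPolynomial (Fin r ⊕ Fin s) k) ^ d} * extA (s := s) I ⊔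
          Ideal.span {X (Sum.inl i) - X (Sum.inr j)}).colon
        (Ideal.span {(X (Sum.inr j) : MvPolynomial (Fin r ⊕ Fin s) k) ^ d * f}) ∧
      P ∈ associatedPrimes (MvPolynomial (Fin r ⊕ Fin s) k)
        (MvPolynomial (Fin r ⊕ Fin s) k ⧸
          (Ideal.span {(X (Sum.inr j) : MvPolynomial (Fin r ⊕ Fin s) k) ^ d} * extA (s := s) I ⊔
            Ideal.span {X (Sum.inl i) - X (Sum.inr j)})) := by
  have hxy := isPrime_span_X_sub_X (R := k) (Sum.inl i : Fin r ⊕ Fin s) (Sum.inr j)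
  have hcancel : ∀ g, X (Sum.inr j) ^ d * g ∈ Ideal.span {X (Sum.inl i) - X (Sum.inr j)} →
      g ∈ Ideal.span {(X (Sum.inl i) - X (Sum.inr j) : MvPolynomial (Fin r ⊕ Fin s) k)} :=
    fun g hg => (hxy.mem_or_mem hg).resolve_left
      (mt Ideal.mem_span_singleton.mp (X_sub_X_not_dvd_X_pow _ _ d))
  have hcolon := hPf.trans (Ideal.colon_span_mul_sup_eq hcancel f).symm
  have : 𝔭.IsPrime := h𝔭.isPrime
  have : P.IsPrime := hP ▸ isPrime_extA_sup_span_X_sub_X 𝔭 i j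
  exact ⟨hcolon, Ideal.isAssociatedPrime_quotient_of_eq_colon hcolon⟩

theorem stmt16 {k : Type*} [Field k] {r s : ℕ}
    (I : Ideal (MvPolynomial (Fin r) k)) (hIh : IsHomogIdeal I)
    (i : Fin r) (j : Fin s) (d : ℕ) (hd : 1 ≤ d)
    (𝔭 : Ideal (MvPolynomial (Fin r) k))
    (h𝔭 : 𝔭 ∈ associatedPrimes (MvPolynomial (Fin r) k) (MvPolynomial (Fin r) k ⧸ I))
    (P : Ideal (MvPolynomial (Fin r ⊕ Fin s) k))
    (f : MvPolynomial (Fin r ⊕ Fin s) k)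
    (hP : P = extA (s := s) 𝔭 ⊔ Ideal.span {X (Sum.inl i) - X (Sum.inr j)})
    (hPf : P = (extA (s := s) I ⊔
        Ideal.span {X (Sum.inl i) - X (Sum.inr j)}).colon (Ideal.span {f})) :
    P = (Ideal.span {(X (Sum.inr j) : MvPolynomial (Fin r ⊕ Fin s) k) ^ d} * extA (s := s) I ⊔
          Ideal.span {X (Sum.inl i) - X (Sum.inr j)}).colon
        (Ideal.span {(X (Sum.inr j) : MvPolynomial (Fin r ⊕ Fin s) k) ^ d * f}) ∧
      P ∈ associatedPrimes (MvPolynomial (Fin r ⊕ Fin s) k)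
        (MvPolynomial (Fin r ⊕ Fin s) k ⧸
          (Ideal.span {(X (Sum.inr j) : MvPolynomial (Fin r ⊕ Fin s) k) ^ d} * extA (s := s) I ⊔
            Ideal.span {X (Sum.inl i) - X (Sum.inr j)})) :=
  stmt16_general I i j d 𝔭 h𝔭 P f hP hPf
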